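/- arXiv:2509.06438 — 3 statements merged into one kernel-verified Lean document; each statement's English description precedes it below -/
import Mathlib

section
/- Let F : ℝ^d → ℝ^n (d ≤ n) be differentiable at a point with DF injective there, and define the orthogonal projection onto the image of DF by S = DF(DFᵗDF)⁻¹DFᵗ. If F(z) = (z, f(z)) is a graph map with Df the derivative of f : ℝ^d → ℝ^{n-d}, then S = [[I_d, 0],[0, 0]] + [[0, Dfᵗ],[Df, 0]] + E, where the error matrix E satisfies ‖E‖ ≤ C·‖Df‖² whenever ‖Df‖ ≤ 1, for a constant C depending only on n. -/
/-- L² operator norm of a matrix, viewed as a linear map between Euclidean spaces. -/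
noncomputable def matOpNorm {α β : Type*} [Fintype α] [Fintype β] [DecidableEq α] [DecidableEq β]
    (M : Matrix α β ℝ) : ℝ :=
  ‖LinearMap.toContinuousLinearMap (Matrix.toEuclideanLin M)‖

/-- The differential `DF = [[I_d],[B]]` of the graph map `z ↦ (z, f(z))`, `B = Df`. -/
def graphDF {d m : ℕ} (B : Matrix (Fin m) (Fin d) ℝ) : Matrix (Fin d ⊕ Fin m) (Fin d) ℝ :=
  Matrix.of (Sum.elim (fun i => (1 : Matrix (Fin d) (Fin d) ℝ) i) (fun i => B i))

/-- The orthogonal projection `S = DF (DFᵗDF)⁻¹ DFᵗ` onto the tangent plane of the graph. -/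
noncomputable def graphProj {d m : ℕ} (B : Matrix (Fin m) (Fin d) ℝ) :
    Matrix (Fin d ⊕ Fin m) (Fin d ⊕ Fin m) ℝ :=
  graphDF B * ((graphDF B).transpose * graphDF B)⁻¹ * (graphDF B).transpose

open scoped Matrix.Norms.L2Operator RealInnerProductSpace Matrix

lemma graphDF_eq {d m : ℕ} (B : Matrix (Fin m) (Fin d) ℝ) : graphDF B = Matrix.fromRows 1 B := rfl

lemma inv_one_add_norm_le {k : Type*} [Fintype k] [DecidableEq k] {A : Matrix k k ℝ} (hA : A.PosSemidef) : ‖(1 + A)⁻¹‖ ≤ 1 := by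
  have hP : (1 + A).PosDef := Matrix.PosDef.add_posSemidef Matrix.PosDef.one hA
  have hdet : IsUnit (1 + A).det := (Matrix.isUnit_iff_isUnit_det _).1 hP.isUnit
  rw [Matrix.cstar_norm_def]
  refine ContinuousLinearMap.opNorm_le_bound _ zero_le_one fun x => ?_
  rw [one_mul]
  set f := Matrix.toEuclideanCLM (𝕜 := ℝ) (n := k) with hf
  set y := f (1 + A)⁻¹ x with hy
  have hfy : f (1 + A) y = x := by
    have h1 : f ((1 + A) * (1 + A)⁻¹) x = x := by
      rw [Matrix.mul_nonsing_inv _ hdet, map_one, ContinuousLinearMap.one_apply]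
    rw [map_mul] at h1
    exact h1
  have hxy : x = y + f A y := by
    rw [← hfy, map_add, map_one, ContinuousLinearMap.add_apply, ContinuousLinearMap.one_apply]
  have hA0 : 0 ≤ (inner ℝ (f A y) y : ℝ) := by
    have h2 := hA.dotProduct_mulVec_nonneg (WithLp.equiv 2 (k → ℝ) y)
    simp only [star_trivial] at h2
    rw [real_inner_comm, PiLp.inner_apply]
    simpa [hf, Matrix.ofLp_toEuclideanCLM, dotProduct, RCLike.inner_apply,
      Matrix.mulVec, mul_comm] using h2
  have h1 : ‖y‖ * ‖y‖ ≤ ‖x‖ * ‖y‖ := by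
    calc ‖y‖ * ‖y‖ = (inner ℝ y y : ℝ) := (real_inner_self_eq_norm_mul_norm y).symm
    _ ≤ (inner ℝ x y : ℝ) := by rw [hxy, inner_add_left]; linarith
    _ ≤ ‖x‖ * ‖y‖ := real_inner_le_norm x y
  rcases eq_or_lt_of_le (norm_nonneg y) with h0 | h0
  · show ‖y‖ ≤ ‖x‖
    rw [← h0]; exact norm_nonneg x
  · exact le_of_mul_le_mul_right h1 h0

theorem stmt_10 (d m : ℕ) :
    ∃ C : ℝ, 0 < C ∧ ∀ B : Matrix (Fin m) (Fin d) ℝ, matOpNorm B ≤ 1 →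
      matOpNorm (graphProj B -
        (Matrix.fromBlocks (1 : Matrix (Fin d) (Fin d) ℝ) 0 0 (0 : Matrix (Fin m) (Fin m) ℝ) +
         Matrix.fromBlocks 0 B.transpose B 0)) ≤ C * matOpNorm B ^ 2 := by
  refine ⟨3, by norm_num, fun B hB => ?_⟩
  replace hB : ‖B‖ ≤ 1 := hB
  show ‖graphProj B - (Matrix.fromBlocks 1 0 0 0 + Matrix.fromBlocks 0 Bᵀ B 0)‖ ≤ 3 * ‖B‖ ^ 2
  set A := Bᵀ * B with hAdef
  have hAps : A.PosSemidef := by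
    have h := Matrix.posSemidef_conjTranspose_mul_self B
    rwa [Matrix.conjTranspose_eq_transpose_of_trivial] at h
  have hP : (1 + A).PosDef := Matrix.PosDef.add_posSemidef Matrix.PosDef.one hAps
  have hdet : IsUnit (1 + A).det := (Matrix.isUnit_iff_isUnit_det _).1 hP.isUnit
  set G := (1 + A)⁻¹ with hGdef
  have hnormA : ‖A‖ = ‖B‖ * ‖B‖ := by
    rw [hAdef, ← Matrix.conjTranspose_eq_transpose_of_trivial B,
      Matrix.l2_opNorm_conjTranspose_mul_self]
  -- the block identity
  have hDFT : (Matrix.fromRows (1 : Matrix (Fin d) (Fin d) ℝ) B)ᵀ = Matrix.fromCols 1 Bᵀ := by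
    rw [Matrix.transpose_fromRows, Matrix.transpose_one]
  have hDtD : (Matrix.fromRows (1 : Matrix (Fin d) (Fin d) ℝ) B)ᵀ *
      Matrix.fromRows (1 : Matrix (Fin d) (Fin d) ℝ) B = 1 + A := by
    rw [hDFT, Matrix.fromCols_mul_fromRows, Matrix.one_mul]
  have hproj : graphProj B = Matrix.fromBlocks G (G * Bᵀ) (B * G) (B * G * Bᵀ) := by
    rw [graphProj, graphDF_eq, hDtD, hDFT, Matrix.fromRows_mul,
      Matrix.fromRows_mul_fromCols, Matrix.one_mul, Matrix.mul_one, Matrix.mul_one]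
  set K : Matrix (Fin d ⊕ Fin m) (Fin d) ℝ := Matrix.fromRows 0 B with hKdef
  have hE : graphProj B -
      (Matrix.fromBlocks (1 : Matrix (Fin d) (Fin d) ℝ) 0 0 (0 : Matrix (Fin m) (Fin m) ℝ) +
        Matrix.fromBlocks 0 Bᵀ B 0)
      = graphDF B * (G - 1) * (graphDF B)ᵀ + K * Kᵀ := by
    rw [hproj, graphDF_eq, hDFT, Matrix.fromRows_mul, Matrix.fromRows_mul_fromCols,
      hKdef, Matrix.transpose_fromRows, Matrix.transpose_zero,
      Matrix.fromRows_mul_fromCols, Matrix.fromBlocks_add, Matrix.fromBlocks_add,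
      sub_eq_iff_eq_add, Matrix.fromBlocks_add]
    rw [Matrix.fromBlocks_inj]
    refine ⟨?_, ?_, ?_, ?_⟩ <;>
      simp only [hGdef, Matrix.mul_sub, Matrix.sub_mul, Matrix.mul_one, Matrix.one_mul,
        Matrix.mul_zero, Matrix.zero_mul, add_zero, zero_add] <;>
      abel
  rw [hE]
  -- norm estimates
  have hG1 : ‖G‖ ≤ 1 := inv_one_add_norm_le hAps
  have hGm1 : ‖G - 1‖ ≤ ‖B‖ * ‖B‖ := by
    have h1 : G * (1 + A) = 1 := Matrix.nonsing_inv_mul _ hdet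
    rw [mul_add, mul_one] at h1
    have h2 : G - 1 = -(G * A) := by rw [← h1]; abel
    rw [h2, norm_neg, ← hnormA]
    calc ‖G * A‖ ≤ ‖G‖ * ‖A‖ := Matrix.l2_opNorm_mul _ _
    _ ≤ 1 * ‖A‖ := by gcongr
    _ = ‖A‖ := one_mul _
  have hDFn : ‖graphDF B‖ * ‖graphDF B‖ ≤ 2 := by
    have h1 : ‖(graphDF B)ᴴ * graphDF B‖ = ‖graphDF B‖ * ‖graphDF B‖ :=
      Matrix.l2_opNorm_conjTranspose_mul_self _
    rw [Matrix.conjTranspose_eq_transpose_of_trivial, graphDF_eq, hDtD] at h1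
    rw [graphDF_eq]
    rw [← h1]
    have hone : ‖(1 : Matrix (Fin d) (Fin d) ℝ)‖ ≤ 1 := by
      rw [Matrix.cstar_norm_def, map_one, ContinuousLinearMap.one_def]
      exact ContinuousLinearMap.norm_id_le
    calc ‖1 + A‖ ≤ ‖(1 : Matrix (Fin d) (Fin d) ℝ)‖ + ‖A‖ := norm_add_le _ _
    _ ≤ 1 + 1 := by rw [hnormA]; nlinarith [norm_nonneg B]
    _ = 2 := by norm_num
  have hDFTn : ‖(graphDF B)ᵀ‖ = ‖graphDF B‖ := by
    rw [← Matrix.conjTranspose_eq_transpose_of_trivial]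
    exact Matrix.l2_opNorm_conjTranspose _
  have hKn : ‖K * Kᵀ‖ ≤ ‖B‖ * ‖B‖ := by
    have h1 : ‖(Kᵀ)ᴴ * Kᵀ‖ = ‖Kᵀ‖ * ‖Kᵀ‖ := Matrix.l2_opNorm_conjTranspose_mul_self _
    rw [Matrix.conjTranspose_eq_transpose_of_trivial, Matrix.transpose_transpose] at h1
    have h2 : ‖Kᵀ‖ = ‖K‖ := by
      rw [← Matrix.conjTranspose_eq_transpose_of_trivial]
      exact Matrix.l2_opNorm_conjTranspose _
    have h3 : ‖Kᴴ * K‖ = ‖K‖ * ‖K‖ := Matrix.l2_opNorm_conjTranspose_mul_self _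
    have h4 : Kᴴ * K = A := by
      rw [Matrix.conjTranspose_eq_transpose_of_trivial, hKdef, Matrix.transpose_fromRows,
        Matrix.transpose_zero, Matrix.fromCols_mul_fromRows]
      simp
      exact hAdef.symm
    rw [h4, hnormA] at h3
    rw [h1, h2, ← h3]
  have hprod : ‖graphDF B * (G - 1) * (graphDF B)ᵀ‖ ≤ 2 * (‖B‖ * ‖B‖) := by
    calc ‖graphDF B * (G - 1) * (graphDF B)ᵀ‖
        ≤ ‖graphDF B * (G - 1)‖ * ‖(graphDF B)ᵀ‖ := Matrix.l2_opNorm_mul _ _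
    _ ≤ ‖graphDF B‖ * ‖G - 1‖ * ‖(graphDF B)ᵀ‖ :=
        mul_le_mul_of_nonneg_right (Matrix.l2_opNorm_mul _ _) (norm_nonneg _)
    _ ≤ 2 * (‖B‖ * ‖B‖) := by
        rw [hDFTn]
        nlinarith [norm_nonneg (graphDF B), norm_nonneg (G - 1), norm_nonneg B, hGm1, hDFn]
  calc ‖graphDF B * (G - 1) * (graphDF B)ᵀ + K * Kᵀ‖
      ≤ ‖graphDF B * (G - 1) * (graphDF B)ᵀ‖ + ‖K * Kᵀ‖ := norm_add_le _ _
  _ ≤ 2 * (‖B‖ * ‖B‖) + ‖B‖ * ‖B‖ := by gcongr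
  _ ≤ 3 * ‖B‖ ^ 2 := by nlinarith [norm_nonneg B]
end

section
/- Let F, Q : ℝ^d → ℝ^n be two graph maps F(z) = (z, f(z)), Q(z) = (z, q(z)) with ‖Df(z)‖ ≤ 1/2 and ‖Dq(z)‖ ≤ 1/2. Let S_F = DF(DFᵗDF)⁻¹DFᵗ and S_Q = DQ(DQᵗDQ)⁻¹DQᵗ be the corresponding tangent projections. Then ‖S_F(z) - S_Q(z)‖ ≤ C·‖Df(z) - Dq(z)‖ for a constant C depending only on the dimension. -/
open scoped Matrix

attribute [local instance] Matrix.normedAddCommGroup Matrix.normedSpace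

section Aux

theorem aux_contDiff_matrix {E : Type*} [NormedAddCommGroup E] [NormedSpace ℝ E]
    {a b : Type*} [Fintype a] [Fintype b] {f : E → Matrix a b ℝ}
    (h : ∀ i j, ContDiff ℝ (⊤ : ℕ∞) fun x => f x i j) : ContDiff ℝ (⊤ : ℕ∞) f :=
  contDiff_pi.2 fun i => contDiff_pi.2 fun j => h i j

theorem aux_contDiff_entry {a b : Type*} [Fintype a] [Fintype b] (i : a) (j : b) :
    ContDiff ℝ (⊤ : ℕ∞) fun M : Matrix a b ℝ => M i j :=
  contDiff_pi.1 (contDiff_pi.1 contDiff_id i) j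

theorem aux_contDiff_det {E : Type*} [NormedAddCommGroup E] [NormedSpace ℝ E]
    {a : Type*} [Fintype a] [DecidableEq a] {f : E → Matrix a a ℝ}
    (h : ∀ i j, ContDiff ℝ (⊤ : ℕ∞) fun x => f x i j) : ContDiff ℝ (⊤ : ℕ∞) fun x => (f x).det := by
  simp only [Matrix.det_apply']
  exact ContDiff.sum fun σ _ => ContDiff.mul contDiff_const
    (contDiff_prod fun i _ => h (σ i) i)

theorem aux_contDiff_adjugate {E : Type*} [NormedAddCommGroup E] [NormedSpace ℝ E]
    {a : Type*} [Fintype a] [DecidableEq a] {f : E → Matrix a a ℝ}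
    (h : ∀ i j, ContDiff ℝ (⊤ : ℕ∞) fun x => f x i j) (i j : a) :
    ContDiff ℝ (⊤ : ℕ∞) fun x => (f x).adjugate i j := by
  simp only [Matrix.adjugate_apply]
  refine aux_contDiff_det fun k l => ?_
  simp only [Matrix.updateRow_apply]
  by_cases hk : k = j <;> simp [hk] <;> [exact contDiff_const; exact h k l]

theorem aux_contDiff_inv_entry {E : Type*} [NormedAddCommGroup E] [NormedSpace ℝ E]
    {a : Type*} [Fintype a] [DecidableEq a] {f : E → Matrix a a ℝ}
    (h : ∀ i j, ContDiff ℝ (⊤ : ℕ∞) fun x => f x i j) (hdet : ∀ x, (f x).det ≠ 0) (i j : a) :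
    ContDiff ℝ (⊤ : ℕ∞) fun x => (f x)⁻¹ i j := by
  have : ∀ x, (f x)⁻¹ i j = ((f x).det)⁻¹ * (f x).adjugate i j := by
    intro x
    rw [Matrix.inv_def, Matrix.smul_apply, Ring.inverse_eq_inv', smul_eq_mul]
  simp only [this]
  exact ((aux_contDiff_det h).inv hdet).mul (aux_contDiff_adjugate h i j)

theorem aux_graphDF_transpose_mul {d m : ℕ} (B : Matrix (Fin m) (Fin d) ℝ) :
    (graphDF B)ᵀ * graphDF B = 1 + Bᵀ * B := by
  ext i j
  simp only [Matrix.mul_apply, Matrix.transpose_apply, Matrix.add_apply, Fintype.sum_sum_type,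
    graphDF, Matrix.of_apply, Sum.elim_inl, Sum.elim_inr]
  congr 1
  simp [Matrix.one_apply, ite_mul, Finset.sum_ite_eq, eq_comm]

theorem aux_graphDF_posDef {d m : ℕ} (B : Matrix (Fin m) (Fin d) ℝ) :
    ((graphDF B)ᵀ * graphDF B).PosDef := by
  rw [aux_graphDF_transpose_mul]
  exact Matrix.PosDef.one.add_posSemidef
    (by simpa [Matrix.conjTranspose_eq_transpose_of_trivial] using
      Matrix.posSemidef_conjTranspose_mul_self B)

theorem aux_contDiff_graphProj (d m : ℕ) :
    ContDiff ℝ (⊤ : ℕ∞) (graphProj : Matrix (Fin m) (Fin d) ℝ →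
      Matrix (Fin d ⊕ Fin m) (Fin d ⊕ Fin m) ℝ) := by
  have hgDF : ∀ (i : Fin d ⊕ Fin m) (j : Fin d),
      ContDiff ℝ (⊤ : ℕ∞) fun B : Matrix (Fin m) (Fin d) ℝ => graphDF B i j := by
    rintro (i | i) j
    · simpa [graphDF] using (contDiff_const :
        ContDiff ℝ (⊤ : ℕ∞) fun _ : Matrix (Fin m) (Fin d) ℝ => (1 : Matrix (Fin d) (Fin d) ℝ) i j)
    · simpa [graphDF] using aux_contDiff_entry (a := Fin m) (b := Fin d) i j
  have hA : ∀ i j : Fin d, ContDiff ℝ (⊤ : ℕ∞)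
      fun B : Matrix (Fin m) (Fin d) ℝ => ((graphDF B)ᵀ * graphDF B) i j := by
    intro i j
    simp only [Matrix.mul_apply, Matrix.transpose_apply]
    exact ContDiff.sum fun k _ => (hgDF k i).mul (hgDF k j)
  have hdet : ∀ B : Matrix (Fin m) (Fin d) ℝ, ((graphDF B)ᵀ * graphDF B).det ≠ 0 :=
    fun B => (aux_graphDF_posDef B).det_pos.ne'
  have hinv := aux_contDiff_inv_entry hA hdet
  refine aux_contDiff_matrix fun i j => ?_
  simp only [graphProj, Matrix.mul_apply, Matrix.transpose_apply]
  exact ContDiff.sum fun k _ =>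
    (ContDiff.sum fun l _ => (hgDF i l).mul (hinv l k)).mul (hgDF j k)

theorem aux_equiv_bound {E F : Type*} [NormedAddCommGroup E] [NormedSpace ℝ E]
    [NormedAddCommGroup F] [NormedSpace ℝ F] [FiniteDimensional ℝ E]
    (e : E →ₗ[ℝ] F) : ∃ c : ℝ, 0 < c ∧ ∀ x, ‖e x‖ ≤ c * ‖x‖ := by
  refine ⟨‖LinearMap.toContinuousLinearMap e‖ + 1, by positivity, fun x => ?_⟩
  have h1 := (LinearMap.toContinuousLinearMap e).le_opNorm x
  have h2 : ‖x‖ ≥ 0 := norm_nonneg x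
  simp only [LinearMap.coe_toContinuousLinearMap'] at h1
  nlinarith

theorem aux_matOpNorm_eq {α β : Type*} [Fintype α] [Fintype β] [DecidableEq α] [DecidableEq β]
    (M : Matrix α β ℝ) :
    matOpNorm M = ‖(Matrix.toEuclideanLin.trans
      (LinearMap.toContinuousLinearMap : _ ≃ₗ[ℝ] (EuclideanSpace ℝ β →L[ℝ] EuclideanSpace ℝ α)))
        M‖ := rfl

theorem aux_matOpNorm_nonneg {α β : Type*} [Fintype α] [Fintype β] [DecidableEq α] [DecidableEq β]
    (M : Matrix α β ℝ) : 0 ≤ matOpNorm M := norm_nonneg _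

end Aux

theorem stmt_12 (d m : ℕ) :
    ∃ C : ℝ, 0 < C ∧ ∀ B B' : Matrix (Fin m) (Fin d) ℝ,
      matOpNorm B ≤ 1/2 → matOpNorm B' ≤ 1/2 →
        matOpNorm (graphProj B - graphProj B') ≤ C * matOpNorm (B - B') := by
  classical
  set E := Matrix (Fin m) (Fin d) ℝ
  set N := (Fin d ⊕ Fin m)
  -- norm equivalence constants
  set eE := (Matrix.toEuclideanLin.trans
      (LinearMap.toContinuousLinearMap :
        _ ≃ₗ[ℝ] (EuclideanSpace ℝ (Fin d) →L[ℝ] EuclideanSpace ℝ (Fin m)))) with heE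
  set eN := (Matrix.toEuclideanLin.trans
      (LinearMap.toContinuousLinearMap :
        _ ≃ₗ[ℝ] (EuclideanSpace ℝ N →L[ℝ] EuclideanSpace ℝ N))) with heN
  obtain ⟨c₁, hc₁pos, hc₁⟩ := aux_equiv_bound eN.toLinearMap
  obtain ⟨c₂, hc₂pos, hc₂⟩ := aux_equiv_bound eE.symm.toLinearMap
  have hEnorm : ∀ M : E, ‖M‖ ≤ c₂ * matOpNorm M := by
    intro M
    have h := hc₂ (eE M)
    simp only [LinearEquiv.coe_coe, LinearEquiv.symm_apply_apply] at h
    exact h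
  have hNnorm : ∀ M : Matrix N N ℝ, matOpNorm M ≤ c₁ * ‖M‖ := by
    intro M
    exact hc₁ M
  -- Lipschitz bound via mean value on the closed ball
  set s : Set E := Metric.closedBall (0 : E) (c₂ / 2) with hs
  have hconv : Convex ℝ s := convex_closedBall _ _
  have hcomp : IsCompact s := isCompact_closedBall _ _
  have hproj := aux_contDiff_graphProj d m
  letI : NormedAddCommGroup (E →L[ℝ] Matrix N N ℝ) := ContinuousLinearMap.toNormedAddCommGroup
  have hcont : ContinuousOn (fun x : E => fderiv ℝ graphProj x) s :=
    (hproj.continuous_fderiv (by simp)).continuousOn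
  obtain ⟨K, hK⟩ := hcomp.exists_bound_of_continuousOn hcont
  have h0s : (0 : E) ∈ s := Metric.mem_closedBall_self (by positivity)
  have hK0 : 0 ≤ K := le_trans (norm_nonneg _) (hK 0 h0s)
  refine ⟨c₁ * (K + 1) * c₂, by positivity, fun B B' hB hB' => ?_⟩
  have hBs : B ∈ s := by
    simp only [hs, Metric.mem_closedBall, dist_zero_right]
    calc ‖B‖ ≤ c₂ * matOpNorm B := hEnorm B
      _ ≤ c₂ * (1/2) := by nlinarith
      _ = c₂ / 2 := by ring
  have hB's : B' ∈ s := by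
    simp only [hs, Metric.mem_closedBall, dist_zero_right]
    calc ‖B'‖ ≤ c₂ * matOpNorm B' := hEnorm B'
      _ ≤ c₂ * (1/2) := by nlinarith
      _ = c₂ / 2 := by ring
  have hlip : ‖graphProj B - graphProj B'‖ ≤ K * ‖B - B'‖ :=
    hconv.norm_image_sub_le_of_norm_fderiv_le
      (fun x _ => (hproj.differentiable (by simp)).differentiableAt)
      (fun x hx => hK x hx) hB's hBs
  have h1 : matOpNorm (graphProj B - graphProj B') ≤ c₁ * ‖graphProj B - graphProj B'‖ :=
    hNnorm _
  have h2 : ‖B - B'‖ ≤ c₂ * matOpNorm (B - B') := hEnorm _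
  have h3 : 0 ≤ matOpNorm (B - B') := aux_matOpNorm_nonneg _
  have h4 : 0 ≤ ‖B - B'‖ := norm_nonneg _
  calc matOpNorm (graphProj B - graphProj B') ≤ c₁ * ‖graphProj B - graphProj B'‖ := h1
    _ ≤ c₁ * (K * ‖B - B'‖) := mul_le_mul_of_nonneg_left hlip hc₁pos.le
    _ ≤ c₁ * (K * (c₂ * matOpNorm (B - B'))) :=
        mul_le_mul_of_nonneg_left (mul_le_mul_of_nonneg_left h2 hK0) hc₁pos.le
    _ = c₁ * K * c₂ * matOpNorm (B - B') := by ring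
    _ ≤ c₁ * (K + 1) * c₂ * matOpNorm (B - B') := by
        nlinarith [mul_nonneg (mul_nonneg hc₁pos.le hc₂pos.le) h3]
end

section
/- (Discrete external sphere barrier, one step) Let x₁, …, x_N ∈ ℝ^n, let p be an index with |x_p| = min_i |x_i|, and suppose the updated point satisfies x_p' = x_p + (τ/ε)·Σ_{j=1}^N ω_j · 2·(x_j - x_p), where τ, ε > 0, the weights satisfy ω_j ≥ 0 for all j, and (1/ε)·Σ_j ω_j · |x_j - x_p|² ≤ d. Then |x_p|² ≤ |x_p'|² + 2·d·τ. -/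
open scoped BigOperators

theorem stmt_17 (n N : ℕ) (d τ ε : ℝ) (hτ : 0 < τ) (hε : 0 < ε)
    (x : Fin N → EuclideanSpace ℝ (Fin n)) (p : Fin N)
    (hp : ∀ i, ‖x p‖ ≤ ‖x i‖)
    (ω : Fin N → ℝ) (hω : ∀ j, 0 ≤ ω j)
    (hd : (1/ε) * ∑ j, ω j * ‖x j - x p‖^2 ≤ d)
    (x' : EuclideanSpace ℝ (Fin n))
    (hx' : x' = x p + (τ/ε) • ∑ j, ω j • ((2:ℝ) • (x j - x p))) :
    ‖x p‖^2 ≤ ‖x'‖^2 + 2 * d * τ := by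
  subst hx'
  set v := (τ/ε) • ∑ j, ω j • ((2:ℝ) • (x j - x p)) with hv
  have hS : ∑ j, ω j * ‖x j - x p‖^2 ≤ ε * d := by
    rw [one_div, inv_mul_le_iff₀ hε] at hd
    linarith
  have key : -(d*τ) ≤ (inner ℝ (x p) v : ℝ) := by
    rw [hv, real_inner_smul_right, inner_sum]
    have h1 : ∀ j ∈ Finset.univ, -(ω j * ‖x j - x p‖^2) ≤ (inner ℝ (x p) (ω j • ((2:ℝ) • (x j - x p))) : ℝ) := by
      intro j _
      rw [real_inner_smul_right, real_inner_smul_right]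
      have hns : ‖x j - x p‖^2 = ‖x j‖^2 - 2 * inner ℝ (x j) (x p) + ‖x p‖^2 :=
        norm_sub_sq_real (x j) (x p)
      have hi : (inner ℝ (x p) (x j - x p) : ℝ) = inner ℝ (x j) (x p) - ‖x p‖^2 := by
        rw [inner_sub_right, real_inner_self_eq_norm_sq, real_inner_comm]
      have hle : ‖x p‖^2 ≤ ‖x j‖^2 := by
        have := hp j
        nlinarith [norm_nonneg (x p)]
      nlinarith [hω j]
    have := Finset.sum_le_sum h1
    rw [Finset.sum_neg_distrib] at this
    have h2 : -(ε * d) ≤ ∑ j, (inner ℝ (x p) (ω j • ((2:ℝ) • (x j - x p))) : ℝ) := by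
      linarith
    have h3 := mul_le_mul_of_nonneg_left h2 (le_of_lt (div_pos hτ hε))
    calc -(d*τ) = (τ/ε) * (-(ε*d)) := by field_simp
    _ ≤ _ := h3
  have hexp : ‖x p + v‖^2 = ‖x p‖^2 + 2 * inner ℝ (x p) v + ‖v‖^2 :=
    norm_add_sq_real (x p) v
  nlinarith [sq_nonneg ‖v‖]
end
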